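/- Let R = Q[K, Θ, ξ]/(Θ³, K², ξ² + KΘ, ξK, ξΘ² − (3/2)KΘ²), with all generators in degree 1. Then R is graded with graded pieces of dimensions 1, 3, 3, 1 in degrees 0, 1, 2, 3 respectively, and a Q-basis is {1, ξ, K, Θ, Θ², ξΘ, KΘ, KΘ²}. -/

import Mathlib

noncomputable section

def A8 : Type := Fin 8 → ℚ

namespace A8

instance : AddCommGroup A8 := by unfold A8; infer_instance
instance : Module ℚ A8 := by unfold A8; infer_instance

def mul (a b : A8) : A8 := fun i =>
  match i with
  | 0 => a 0 * b 0
  | 1 => a 0 * b 1 + a 1 * b 0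
  | 2 => a 0 * b 2 + a 2 * b 0
  | 3 => a 0 * b 3 + a 3 * b 0
  | 4 => a 0 * b 4 + a 4 * b 0 + a 3 * b 3
  | 5 => a 0 * b 5 + a 5 * b 0 + a 1 * b 3 + a 3 * b 1
  | 6 => a 0 * b 6 + a 6 * b 0 + a 2 * b 3 + a 3 * b 2 - a 1 * b 1
  | 7 => a 0 * b 7 + a 7 * b 0 + a 2 * b 4 + a 4 * b 2 + a 3 * b 6 + a 6 * b 3
      + (3/2) * (a 1 * b 4 + a 4 * b 1) - (a 1 * b 5 + a 5 * b 1)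
      + (3/2) * (a 3 * b 5 + a 5 * b 3)

def one : A8 := fun i => match i with | 0 => 1 | _ => 0

lemma add_apply (a b : A8) (i : Fin 8) : (a + b) i = a i + b i := rfl
lemma zero_apply (i : Fin 8) : (0 : A8) i = 0 := rfl
lemma smul_apply (r : ℚ) (a : A8) (i : Fin 8) : (r • a) i = r * a i := rfl
lemma sub_apply (a b : A8) (i : Fin 8) : (a - b) i = a i - b i := rfl

lemma ext' {a b : A8} (h : ∀ i, a i = b i) : a = b := funext h

lemma mul_assoc' (a b c : A8) : mul (mul a b) c = mul a (mul b c) :=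
  ext' fun i => by fin_cases i <;> simp [mul] <;> ring

lemma one_mul' (a : A8) : mul one a = a :=
  ext' fun i => by fin_cases i <;> simp [mul, one]

lemma mul_one' (a : A8) : mul a one = a :=
  ext' fun i => by fin_cases i <;> simp [mul, one]

lemma left_distrib' (a b c : A8) : mul a (b + c) = mul a b + mul a c :=
  ext' fun i => by fin_cases i <;> simp [mul, add_apply] <;> ring

lemma right_distrib' (a b c : A8) : mul (a + b) c = mul a c + mul b c :=
  ext' fun i => by fin_cases i <;> simp [mul, add_apply] <;> ring

lemma zero_mul' (a : A8) : mul 0 a = 0 :=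
  ext' fun i => by fin_cases i <;> simp [mul, zero_apply]

lemma mul_zero' (a : A8) : mul a 0 = 0 :=
  ext' fun i => by fin_cases i <;> simp [mul, zero_apply]

lemma mul_comm' (a b : A8) : mul a b = mul b a :=
  ext' fun i => by fin_cases i <;> simp [mul] <;> ring

lemma smul_mul' (r : ℚ) (a b : A8) : mul (r • a) b = r • mul a b :=
  ext' fun i => by fin_cases i <;> simp [mul, smul_apply] <;> ring

instance : CommRing A8 :=
  { (inferInstance : AddCommGroup A8) with
    mul := mul
    one := one
    mul_assoc := mul_assoc'
    one_mul := one_mul'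
    mul_one := mul_one'
    left_distrib := left_distrib'
    right_distrib := right_distrib'
    zero_mul := zero_mul'
    mul_zero := mul_zero'
    mul_comm := mul_comm' }

lemma mul_def (a b : A8) : a * b = mul a b := rfl
lemma one_def : (1 : A8) = one := rfl

instance : Algebra ℚ A8 :=
  Algebra.ofModule
    (fun r x y => smul_mul' r x y)
    (fun r x y => by rw [mul_def, mul_comm' x, smul_mul', mul_comm' y x, ← mul_def])

lemma algebraMap_def (r : ℚ) : algebraMap ℚ A8 r = r • (1 : A8) := rfl

end A8
open MvPolynomial

abbrev P4 : Type := MvPolynomial (Fin 3) ℚ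

def I4 : Ideal P4 := Ideal.span
  { (X 1 : P4) ^ 3, (X 0 : P4) ^ 2,
    (X 2 : P4) ^ 2 + X 0 * X 1,
    (X 2 : P4) * X 0,
    (X 2 : P4) * (X 1) ^ 2 - C (3 / 2 : ℚ) * (X 0 * (X 1) ^ 2) }

abbrev R4 : Type := P4 ⧸ I4

def K4 : R4 := Ideal.Quotient.mk I4 (X 0)
def Θ4 : R4 := Ideal.Quotient.mk I4 (X 1)
def ξ4 : R4 := Ideal.Quotient.mk I4 (X 2)

namespace A8

def e (j : Fin 8) : A8 := fun i => if i = j then 1 else 0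

def v8 : Fin 3 → A8 := ![e 2, e 3, e 1]

lemma one_eq_e0 : (1 : A8) = e 0 :=
  ext' fun i => by fin_cases i <;> simp [one_def, one, e]

lemma e3_mul_e3 : e 3 * e 3 = e 4 :=
  ext' fun i => by fin_cases i <;> simp [mul_def, mul, e]

lemma e1_mul_e3 : e 1 * e 3 = e 5 :=
  ext' fun i => by fin_cases i <;> simp [mul_def, mul, e]

lemma e2_mul_e3 : e 2 * e 3 = e 6 :=
  ext' fun i => by fin_cases i <;> simp [mul_def, mul, e]

lemma e2_mul_e4 : e 2 * e 4 = e 7 :=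
  ext' fun i => by fin_cases i <;> simp [mul_def, mul, e]

lemma aeval_I4_zero : ∀ a ∈ I4, (aeval v8) a = 0 := by
  have hker : I4 ≤ RingHom.ker (aeval v8 : P4 →ₐ[ℚ] A8).toRingHom := by
    rw [I4, Ideal.span_le]
    intro p hp
    simp only [Set.mem_insert_iff, Set.mem_singleton_iff] at hp
    have h32 : (aeval v8) (C (3/2 : ℚ)) = (3/2 : ℚ) • (1 : A8) := by
      rw [aeval_C, algebraMap_def]
    rcases hp with rfl | rfl | rfl | rfl | rfl <;>
    · rw [SetLike.mem_coe, RingHom.mem_ker]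
      simp only [AlgHom.toRingHom_eq_coe, RingHom.coe_coe, map_add, map_sub, map_mul,
        map_pow, aeval_X, h32]
      refine ext' fun i => ?_
      fin_cases i <;>
        simp [v8, pow_succ, mul_def, mul, one_def, one, e,
          add_apply, zero_apply, smul_apply, sub_apply] <;> norm_num
  intro a ha
  exact RingHom.mem_ker.mp (hker ha)

end A8

def φ8 : R4 →ₐ[ℚ] A8 :=
  Ideal.Quotient.liftₐ I4 (aeval A8.v8) A8.aeval_I4_zero

def cand : Fin 8 → R4 := ![1, ξ4, K4, Θ4, Θ4 ^ 2, ξ4 * Θ4, K4 * Θ4, K4 * Θ4 ^ 2]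

lemma φ8_mk (p : P4) : φ8 (Ideal.Quotient.mk I4 p) = aeval A8.v8 p := by
  rw [φ8, Ideal.Quotient.liftₐ_apply]; rfl

lemma φ8_K : φ8 K4 = A8.e 2 := by rw [K4, φ8_mk, aeval_X]; rfl
lemma φ8_Θ : φ8 Θ4 = A8.e 3 := by rw [Θ4, φ8_mk, aeval_X]; rfl
lemma φ8_ξ : φ8 ξ4 = A8.e 1 := by rw [ξ4, φ8_mk, aeval_X]; rfl

lemma φ8_cand : ∀ i, φ8 (cand i) = A8.e i := by
  intro i
  fin_cases i
  · show φ8 1 = A8.e 0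
    rw [map_one, A8.one_eq_e0]
  · exact φ8_ξ
  · exact φ8_K
  · exact φ8_Θ
  · show φ8 (Θ4 ^ 2) = A8.e 4
    rw [map_pow, φ8_Θ, pow_two, A8.e3_mul_e3]
  · show φ8 (ξ4 * Θ4) = A8.e 5
    rw [map_mul, φ8_ξ, φ8_Θ, A8.e1_mul_e3]
  · show φ8 (K4 * Θ4) = A8.e 6
    rw [map_mul, φ8_K, φ8_Θ, A8.e2_mul_e3]
  · show φ8 (K4 * Θ4 ^ 2) = A8.e 7
    rw [map_mul, map_pow, φ8_K, φ8_Θ, pow_two, A8.e3_mul_e3, A8.e2_mul_e4]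

def coordLM (j : Fin 8) : A8 →ₗ[ℚ] ℚ where
  toFun a := a j
  map_add' _ _ := rfl
  map_smul' _ _ := rfl

lemma coordLM_apply (j : Fin 8) (a : A8) : coordLM j a = a j := rfl

lemma cand_li : LinearIndependent ℚ cand := by
  apply LinearIndependent.of_comp (φ8.toLinearMap)
  have h : (φ8.toLinearMap ∘ cand) = A8.e := funext fun i => φ8_cand i
  rw [h, Fintype.linearIndependent_iff]
  intro g hg j
  have h0 := congrArg (coordLM j) hg
  rw [map_sum, map_zero] at h0
  simp only [map_smul] at h0
  rw [Finset.sum_eq_single j] at h0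
  · simpa [coordLM_apply, A8.e] using h0
  · intro b _ hb
    simp [coordLM_apply, A8.e, Ne.symm hb]
  · intro hj; exact absurd (Finset.mem_univ j) hj

def gradedPiece4 (d : ℕ) : Submodule ℚ R4 :=
  Submodule.span ℚ
    ((fun p : ℕ × ℕ × ℕ => K4 ^ p.1 * Θ4 ^ p.2.1 * ξ4 ^ p.2.2) ''
      {p | p.1 + p.2.1 + p.2.2 = d})

-- Relations in R4
lemma mk_gen_zero (p : P4)
    (hp : p ∈ ({(X 1 : P4) ^ 3, (X 0 : P4) ^ 2, (X 2 : P4) ^ 2 + X 0 * X 1,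
      (X 2 : P4) * X 0,
      (X 2 : P4) * (X 1) ^ 2 - C (3 / 2 : ℚ) * (X 0 * (X 1) ^ 2)} : Set P4)) :
    Ideal.Quotient.mk I4 p = 0 :=
  Ideal.Quotient.eq_zero_iff_mem.mpr (Ideal.subset_span hp)

def q32 : R4 := algebraMap ℚ R4 (3/2)

lemma hΘ3 : Θ4 ^ 3 = 0 := by
  have := mk_gen_zero ((X 1) ^ 3) (by left; rfl)
  rw [map_pow] at this; exact this

lemma hK2 : K4 ^ 2 = 0 := by
  have := mk_gen_zero ((X 0) ^ 2) (by right; left; rfl)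
  rw [map_pow] at this; exact this

lemma hξ2 : ξ4 ^ 2 = -(K4 * Θ4) := by
  have := mk_gen_zero ((X 2) ^ 2 + X 0 * X 1) (by right; right; left; rfl)
  rw [map_add, map_pow, map_mul] at this
  exact eq_neg_of_add_eq_zero_left this

lemma hξK : ξ4 * K4 = 0 := by
  have := mk_gen_zero ((X 2) * X 0) (by right; right; right; left; rfl)
  rw [map_mul] at this; exact this

lemma hξΘ2 : ξ4 * Θ4 ^ 2 = q32 * (K4 * Θ4 ^ 2) := by
  have := mk_gen_zero ((X 2) * (X 1) ^ 2 - C (3 / 2 : ℚ) * (X 0 * (X 1) ^ 2))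
    (by right; right; right; right; rfl)
  rw [map_sub, map_mul, map_mul, map_pow, map_mul, map_pow] at this
  have h2 : (Ideal.Quotient.mk I4) (C (3/2 : ℚ)) = q32 := by
    rw [q32, ← MvPolynomial.algebraMap_eq, Ideal.Quotient.mk_algebraMap]
  rw [h2] at this
  exact sub_eq_zero.mp this

set_option synthInstance.maxHeartbeats 1000000 in
instance : SMulCommClass ℚ R4 R4 := inferInstance

def S8 : Submodule ℚ R4 := Submodule.span ℚ (Set.range cand)

lemma cand_mem_S8 (i : Fin 8) : cand i ∈ S8 := Submodule.subset_span ⟨i, rfl⟩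

lemma mul_closed (a : R4) (ha : ∀ i : Fin 8, a * cand i ∈ S8) :
    ∀ x ∈ S8, a * x ∈ S8 := by
  intro x hx
  induction hx using Submodule.span_induction with
  | mem y hy => obtain ⟨i, rfl⟩ := hy; exact ha i
  | zero => rw [mul_zero]; exact S8.zero_mem
  | add y z _ _ hy hz => rw [mul_add]; exact S8.add_mem hy hz
  | smul r y _ hy =>
      rw [show a * (r • y) = r • (a * y) from mul_smul_comm r a y]
      exact S8.smul_mem r hy

lemma q32_mul_mem {x : R4} (hx : x ∈ S8) : q32 * x ∈ S8 := by
  rw [q32, ← Algebra.smul_def]; exact S8.smul_mem _ hx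

lemma c0_eq : cand 0 = 1 := rfl
lemma c1_eq : cand 1 = ξ4 := rfl
lemma c2_eq : cand 2 = K4 := rfl
lemma c3_eq : cand 3 = Θ4 := rfl
lemma c4_eq : cand 4 = Θ4 ^ 2 := rfl
lemma c5_eq : cand 5 = ξ4 * Θ4 := rfl
lemma c6_eq : cand 6 = K4 * Θ4 := rfl
lemma c7_eq : cand 7 = K4 * Θ4 ^ 2 := rfl

lemma K_mul_closed : ∀ x ∈ S8, K4 * x ∈ S8 := by
  apply mul_closed
  intro i
  fin_cases i
  · show K4 * (1 : R4) ∈ S8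
    rw [mul_one]; exact cand_mem_S8 2
  · show K4 * ξ4 ∈ S8
    rw [show K4 * ξ4 = 0 by linear_combination hξK]; exact S8.zero_mem
  · show K4 * K4 ∈ S8
    rw [show K4 * K4 = 0 by linear_combination hK2]; exact S8.zero_mem
  · show K4 * Θ4 ∈ S8; exact cand_mem_S8 6
  · show K4 * Θ4 ^ 2 ∈ S8; exact cand_mem_S8 7
  · show K4 * (ξ4 * Θ4) ∈ S8
    rw [show K4 * (ξ4 * Θ4) = 0 by linear_combination Θ4 * hξK]; exact S8.zero_mem
  · show K4 * (K4 * Θ4) ∈ S8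
    rw [show K4 * (K4 * Θ4) = 0 by linear_combination Θ4 * hK2]; exact S8.zero_mem
  · show K4 * (K4 * Θ4 ^ 2) ∈ S8
    rw [show K4 * (K4 * Θ4 ^ 2) = 0 by linear_combination Θ4 ^ 2 * hK2]; exact S8.zero_mem

lemma Θ_mul_closed : ∀ x ∈ S8, Θ4 * x ∈ S8 := by
  apply mul_closed
  intro i
  fin_cases i
  · show Θ4 * (1 : R4) ∈ S8
    rw [mul_one]; exact cand_mem_S8 3
  · show Θ4 * ξ4 ∈ S8
    rw [show Θ4 * ξ4 = ξ4 * Θ4 from mul_comm _ _]; exact cand_mem_S8 5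
  · show Θ4 * K4 ∈ S8
    rw [show Θ4 * K4 = K4 * Θ4 from mul_comm _ _]; exact cand_mem_S8 6
  · show Θ4 * Θ4 ∈ S8
    rw [show Θ4 * Θ4 = Θ4 ^ 2 by ring]; exact cand_mem_S8 4
  · show Θ4 * Θ4 ^ 2 ∈ S8
    rw [show Θ4 * Θ4 ^ 2 = 0 by linear_combination hΘ3]; exact S8.zero_mem
  · show Θ4 * (ξ4 * Θ4) ∈ S8
    rw [show Θ4 * (ξ4 * Θ4) = q32 * (K4 * Θ4 ^ 2) by linear_combination hξΘ2]
    exact q32_mul_mem (cand_mem_S8 7)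
  · show Θ4 * (K4 * Θ4) ∈ S8
    rw [show Θ4 * (K4 * Θ4) = K4 * Θ4 ^ 2 by ring]; exact cand_mem_S8 7
  · show Θ4 * (K4 * Θ4 ^ 2) ∈ S8
    rw [show Θ4 * (K4 * Θ4 ^ 2) = K4 * Θ4 ^ 3 by ring, hΘ3, mul_zero]; exact S8.zero_mem

lemma ξ_mul_closed : ∀ x ∈ S8, ξ4 * x ∈ S8 := by
  apply mul_closed
  intro i
  fin_cases i
  · show ξ4 * (1 : R4) ∈ S8
    rw [mul_one]; exact cand_mem_S8 1
  · show ξ4 * ξ4 ∈ S8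
    rw [show ξ4 * ξ4 = -(K4 * Θ4) by linear_combination hξ2]
    exact S8.neg_mem (cand_mem_S8 6)
  · show ξ4 * K4 ∈ S8
    rw [hξK]; exact S8.zero_mem
  · show ξ4 * Θ4 ∈ S8; exact cand_mem_S8 5
  · show ξ4 * Θ4 ^ 2 ∈ S8
    rw [hξΘ2]; exact q32_mul_mem (cand_mem_S8 7)
  · show ξ4 * (ξ4 * Θ4) ∈ S8
    rw [show ξ4 * (ξ4 * Θ4) = -(K4 * Θ4 ^ 2) by linear_combination Θ4 * hξ2]
    exact S8.neg_mem (cand_mem_S8 7)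
  · show ξ4 * (K4 * Θ4) ∈ S8
    rw [show ξ4 * (K4 * Θ4) = 0 by linear_combination Θ4 * hξK]; exact S8.zero_mem
  · show ξ4 * (K4 * Θ4 ^ 2) ∈ S8
    rw [show ξ4 * (K4 * Θ4 ^ 2) = 0 by linear_combination Θ4 ^ 2 * hξK]; exact S8.zero_mem

lemma mk_mem_S8 (p : P4) : Ideal.Quotient.mk I4 p ∈ S8 := by
  induction p using MvPolynomial.induction_on with
  | C a =>
      rw [← MvPolynomial.algebraMap_eq, Ideal.Quotient.mk_algebraMap,
        Algebra.algebraMap_eq_smul_one]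
      exact S8.smul_mem a (cand_mem_S8 0)
  | add p q hp hq => rw [map_add]; exact S8.add_mem hp hq
  | mul_X p n hp =>
      rw [map_mul]
      have h := mul_comm (Ideal.Quotient.mk I4 p) (Ideal.Quotient.mk I4 (X n))
      rw [h]
      fin_cases n
      · exact K_mul_closed _ hp
      · exact Θ_mul_closed _ hp
      · exact ξ_mul_closed _ hp

lemma S8_top : S8 = ⊤ := by
  rw [Submodule.eq_top_iff']
  intro x
  obtain ⟨p, rfl⟩ := Ideal.Quotient.mk_surjective x
  exact mk_mem_S8 p

def bas : Module.Basis (Fin 8) ℚ R4 :=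
  Module.Basis.mk cand_li (by rw [← S8]; exact le_of_eq S8_top.symm)

lemma bas_apply (i : Fin 8) : bas i = cand i := by rw [bas, Module.Basis.mk_apply]

-- degree 0
lemma gp0 : gradedPiece4 0 = Submodule.span ℚ {(1 : R4)} := by
  apply le_antisymm
  · rw [gradedPiece4, Submodule.span_le]
    rintro x ⟨⟨a, b, c⟩, hp, rfl⟩
    simp only [Set.mem_setOf_eq] at hp
    obtain rfl : a = 0 := by omega
    obtain rfl : b = 0 := by omega
    obtain rfl : c = 0 := by omega
    simp only [pow_zero, mul_one, one_mul]
    exact Submodule.subset_span rfl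
  · rw [Submodule.span_le]
    rintro x rfl
    exact Submodule.subset_span ⟨(0, 0, 0), by simp, by simp⟩

lemma gp0_rank : Module.finrank ℚ (gradedPiece4 0) = 1 := by
  rw [gp0]
  exact finrank_span_singleton (by rw [← c0_eq]; exact cand_li.ne_zero 0)

-- degree 1
def emb1 : Fin 3 → Fin 8 := ![2, 3, 1]

lemma gp1 : gradedPiece4 1 = Submodule.span ℚ (Set.range (cand ∘ emb1)) := by
  apply le_antisymm
  · rw [gradedPiece4, Submodule.span_le]
    rintro x ⟨⟨a, b, c⟩, hp, rfl⟩
    simp only [Set.mem_setOf_eq] at hp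
    have ha : a ≤ 1 := by omega
    interval_cases a
    · have hb : b ≤ 1 := by omega
      interval_cases b
      · obtain rfl : c = 1 := by omega
        simp only [pow_zero, pow_one, mul_one, one_mul]
        exact Submodule.subset_span ⟨2, rfl⟩
      · obtain rfl : c = 0 := by omega
        simp only [pow_zero, pow_one, mul_one, one_mul]
        exact Submodule.subset_span ⟨1, rfl⟩
    · obtain rfl : b = 0 := by omega
      obtain rfl : c = 0 := by omega
      simp only [pow_zero, pow_one, mul_one, one_mul]
      exact Submodule.subset_span ⟨0, rfl⟩
  · rw [Submodule.span_le]
    rintro x ⟨j, rfl⟩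
    fin_cases j
    · exact Submodule.subset_span ⟨(1, 0, 0), by simp, by simp [emb1, c2_eq]⟩
    · exact Submodule.subset_span ⟨(0, 1, 0), by simp, by simp [emb1, c3_eq]⟩
    · exact Submodule.subset_span ⟨(0, 0, 1), by simp, by simp [emb1, c1_eq]⟩

lemma gp1_rank : Module.finrank ℚ (gradedPiece4 1) = 3 := by
  rw [gp1, finrank_span_eq_card (cand_li.comp emb1 (by decide))]
  simp

-- degree 2
def emb2 : Fin 3 → Fin 8 := ![4, 5, 6]

lemma gp2 : gradedPiece4 2 = Submodule.span ℚ (Set.range (cand ∘ emb2)) := by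
  apply le_antisymm
  · rw [gradedPiece4, Submodule.span_le]
    rintro x ⟨⟨a, b, c⟩, hp, rfl⟩
    simp only [Set.mem_setOf_eq] at hp
    have ha : a ≤ 2 := by omega
    interval_cases a
    · have hb : b ≤ 2 := by omega
      interval_cases b
      · obtain rfl : c = 2 := by omega
        simp only [pow_zero, one_mul]
        rw [show ξ4 ^ 2 = -(K4 * Θ4) from hξ2]
        refine (Submodule.span ℚ _).neg_mem ?_
        exact Submodule.subset_span ⟨2, by simp [emb2, c6_eq]⟩
      · obtain rfl : c = 1 := by omega
        simp only [pow_zero, pow_one, one_mul]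
        rw [show Θ4 * ξ4 = ξ4 * Θ4 from mul_comm _ _]
        exact Submodule.subset_span ⟨1, by simp [emb2, c5_eq]⟩
      · obtain rfl : c = 0 := by omega
        simp only [pow_zero, one_mul, mul_one]
        exact Submodule.subset_span ⟨0, by simp [emb2, c4_eq]⟩
    · have hb : b ≤ 1 := by omega
      interval_cases b
      · obtain rfl : c = 1 := by omega
        simp only [pow_zero, pow_one, mul_one, one_mul]
        rw [show K4 * ξ4 = 0 by linear_combination hξK]
        exact (Submodule.span ℚ _).zero_mem
      · obtain rfl : c = 0 := by omega
        simp only [pow_zero, pow_one, mul_one]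
        exact Submodule.subset_span ⟨2, by simp [emb2, c6_eq]⟩
    · obtain rfl : b = 0 := by omega
      obtain rfl : c = 0 := by omega
      simp only [pow_zero, mul_one]
      rw [hK2]
      exact (Submodule.span ℚ _).zero_mem
  · rw [Submodule.span_le]
    rintro x ⟨j, rfl⟩
    fin_cases j
    · exact Submodule.subset_span ⟨(0, 2, 0), by simp, by simp [emb2, c4_eq]⟩
    · exact Submodule.subset_span ⟨(0, 1, 1), by simp, by show _ = cand 5; rw [c5_eq]; ring⟩
    · exact Submodule.subset_span ⟨(1, 1, 0), by simp, by show _ = cand 6; rw [c6_eq]; ring⟩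

lemma gp2_rank : Module.finrank ℚ (gradedPiece4 2) = 3 := by
  rw [gp2, finrank_span_eq_card (cand_li.comp emb2 (by decide))]
  simp

-- degree 3
lemma gp3 : gradedPiece4 3 = Submodule.span ℚ {K4 * Θ4 ^ 2} := by
  apply le_antisymm
  · rw [gradedPiece4, Submodule.span_le]
    rintro x ⟨⟨a, b, c⟩, hp, rfl⟩
    simp only [Set.mem_setOf_eq] at hp
    have ha : a ≤ 3 := by omega
    interval_cases a
    · have hb : b ≤ 3 := by omega
      interval_cases b
      · obtain rfl : c = 3 := by omega
        simp only [pow_zero, one_mul]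
        rw [show ξ4 ^ 3 = 0 by linear_combination ξ4 * hξ2 - Θ4 * hξK]
        exact (Submodule.span ℚ _).zero_mem
      · obtain rfl : c = 2 := by omega
        simp only [pow_zero, pow_one, one_mul]
        rw [show Θ4 * ξ4 ^ 2 = -(K4 * Θ4 ^ 2) by linear_combination Θ4 * hξ2]
        exact (Submodule.span ℚ _).neg_mem (Submodule.subset_span rfl)
      · obtain rfl : c = 1 := by omega
        simp only [pow_zero, pow_one, one_mul]
        rw [show Θ4 ^ 2 * ξ4 = q32 * (K4 * Θ4 ^ 2) by linear_combination hξΘ2,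
          q32, ← Algebra.smul_def]
        exact (Submodule.span ℚ _).smul_mem _ (Submodule.subset_span rfl)
      · obtain rfl : c = 0 := by omega
        simp only [pow_zero, one_mul, mul_one]
        rw [hΘ3]
        exact (Submodule.span ℚ _).zero_mem
    · have hb : b ≤ 2 := by omega
      interval_cases b
      · obtain rfl : c = 2 := by omega
        simp only [pow_zero, pow_one, one_mul, mul_one]
        rw [show K4 * ξ4 ^ 2 = 0 by linear_combination K4 * hξ2 - Θ4 * hK2]
        exact (Submodule.span ℚ _).zero_mem
      · obtain rfl : c = 1 := by omega
        simp only [pow_one]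
        rw [show K4 * Θ4 * ξ4 = 0 by linear_combination Θ4 * hξK]
        exact (Submodule.span ℚ _).zero_mem
      · obtain rfl : c = 0 := by omega
        simp only [pow_zero, pow_one, mul_one]
        exact Submodule.subset_span rfl
    · have hb : b ≤ 1 := by omega
      interval_cases b
      · obtain rfl : c = 1 := by omega
        simp only [pow_zero, pow_one, mul_one, one_mul]
        rw [show K4 ^ 2 * ξ4 = 0 by linear_combination ξ4 * hK2]
        exact (Submodule.span ℚ _).zero_mem
      · obtain rfl : c = 0 := by omega
        simp only [pow_zero, pow_one, mul_one]
        rw [show K4 ^ 2 * Θ4 = 0 by linear_combination Θ4 * hK2]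
        exact (Submodule.span ℚ _).zero_mem
    · obtain rfl : b = 0 := by omega
      obtain rfl : c = 0 := by omega
      simp only [pow_zero, mul_one]
      rw [show K4 ^ 3 = 0 by linear_combination K4 * hK2]
      exact (Submodule.span ℚ _).zero_mem
  · rw [Submodule.span_le]
    rintro x rfl
    exact Submodule.subset_span ⟨(1, 2, 0), by simp, by simp⟩

lemma gp3_rank : Module.finrank ℚ (gradedPiece4 3) = 1 := by
  rw [gp3]
  exact finrank_span_singleton (by rw [← c7_eq]; exact cand_li.ne_zero 7)

theorem chow_subring_CJ :
    (∃ b : Module.Basis (Fin 8) ℚ R4,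
        ∀ i : Fin 8,
          b i = ![1, ξ4, K4, Θ4, Θ4 ^ 2, ξ4 * Θ4, K4 * Θ4, K4 * Θ4 ^ 2] i) ∧
    Module.finrank ℚ (gradedPiece4 0) = 1 ∧
    Module.finrank ℚ (gradedPiece4 1) = 3 ∧
    Module.finrank ℚ (gradedPiece4 2) = 3 ∧
    Module.finrank ℚ (gradedPiece4 3) = 1 := by
  exact ⟨⟨bas, fun i => bas_apply i⟩, gp0_rank, gp1_rank, gp2_rank, gp3_rank⟩

end
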